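/- arXiv:1210.0805 — 4 statements merged into one kernel-verified Lean document; each statement's English description precedes it below -/
import Mathlib

section
/- Let q_Ω(t) := (I_m + tΩ)_Q denote the orthogonal Q-factor in the unique QR-decomposition of I_m + tΩ for skew-symmetric Ω. Then q_Ω(0) = I_m and the derivative of t ↦ q_Ω(t) at t = 0 equals Ω. -/
/-!
Since `q t` is orthogonal and `Ω` is skew, `(R t)ᵀ * R t = (1 + t • Ω)ᵀ * (1 + t • Ω) = 1 - t² Ω²`.
Solving this for the upper triangular `R t` entry by entry (the Cholesky recurrence, column by
column and top to bottom) shows `R t = 1 + O(t²)`. Then `q t = 1 + t • Ω - q t * (R t - 1)`, and the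
last term is `O(t²)` because the entries of an orthogonal matrix are bounded by `1`.
-/

open Matrix Asymptotics Filter Topology

theorem eq_and_hasDerivAt_of_isBigO_sq {f : ℝ → ℝ} {a b : ℝ}
    (h : (fun t => f t - a - t * b) =O[𝓝 0] fun t => t ^ 2) : f 0 = a ∧ HasDerivAt f b 0 := by
  have h0 : f 0 = a := by
    simpa [sub_eq_zero] using h.eq_zero_imp.self_of_nhds (by norm_num)
  refine ⟨h0, ?_⟩
  rw [hasDerivAt_iff_isLittleO]
  simpa [h0, smul_eq_mul, mul_comm] using h.trans_isLittleO (isLittleO_pow_id one_lt_two)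

theorem Matrix.transpose_mul_self_eq_of_eq_mul {n S : Type*} [Fintype n] [DecidableEq n]
    [CommSemiring S] {q R A : Matrix n n S} (hq : qᵀ * q = 1) (hA : A = q * R) :
    Rᵀ * R = Aᵀ * A := by
  rw [hA, transpose_mul, Matrix.mul_assoc, ← Matrix.mul_assoc qᵀ, hq, Matrix.one_mul]

theorem Matrix.one_add_smul_transpose_mul_self_of_skew {n S : Type*} [Fintype n] [DecidableEq n]
    [CommRing S] {Ω : Matrix n n S} (hskew : Ωᵀ = -Ω) (t : S) :
    (1 + t • Ω)ᵀ * (1 + t • Ω) = 1 - t ^ 2 • (Ω * Ω) := by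
  rw [transpose_add, transpose_smul, transpose_one, hskew]
  simp only [Matrix.add_mul, Matrix.mul_add, Matrix.one_mul, Matrix.mul_one, Matrix.smul_mul,
    Matrix.mul_smul, Matrix.neg_mul, smul_neg, ← sq]
  module

theorem Matrix.BlockTriangular.transpose_mul_self_apply {n S : Type*} [Fintype n] [LinearOrder n]
    [CommSemiring S] {R : Matrix n n S} (hR : R.BlockTriangular id) (i j : n) :
    (Rᵀ * R) i j = R i i * R i j + ∑ k with k < i, R k i * R k j := by
  rw [mul_apply, ← Finset.sum_filter_add_sum_filter_not Finset.univ (· < i), add_comm]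
  congr 1
  rw [Finset.sum_eq_single_of_mem i (by simp)]
  · rfl
  · intro k hk hki
    have hik : i < k := lt_of_le_of_ne (not_lt.1 (Finset.mem_filter.1 hk).2) (Ne.symm hki)
    simp [hR hik]

section Cholesky

variable {α n : Type*} [Fintype n] [LinearOrder n] {l : Filter α} {g : α → ℝ}

theorem isBigO_sum_mul_of_tendsto_zero {ι : Type*} (s : Finset ι) {u v : ι → α → ℝ}
    (hg : Tendsto g l (𝓝 0)) (hu : ∀ k ∈ s, u k =O[l] g) (hv : ∀ k ∈ s, v k =O[l] g) :
    (fun t => ∑ k ∈ s, u k t * v k t) =O[l] g := by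
  have hgg : (fun t => g t * g t) =O[l] g := by
    simpa using (isBigO_refl g l).mul (hg.isBigO_one ℝ)
  exact IsBigO.fun_sum fun k hk => ((hu k hk).mul (hv k hk)).trans hgg

variable {R : α → Matrix n n ℝ} (hg : Tendsto g l (𝓝 0)) (hR : ∀ t, (R t).BlockTriangular id)
  (hgram : ∀ i j, (fun t => ((R t)ᵀ * R t - 1) i j) =O[l] g)
include hg hR hgram

theorem isBigO_diag_sub_one_of_transpose_mul_self (hpos : ∀ t i, 0 < R t i i) (j : n)
    (habove : ∀ k < j, (fun t => R t k j) =O[l] g) : (fun t => R t j j - 1) =O[l] g := by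
  have hsum := isBigO_sum_mul_of_tendsto_zero {k | k < j} hg (by simpa using habove)
    (by simpa using habove)
  have hsq : (fun t => R t j j * R t j j - 1) =O[l] g := by
    refine ((hgram j j).sub hsum).congr_left fun t => ?_
    simp only [Matrix.sub_apply, one_apply_eq, (hR t).transpose_mul_self_apply]
    ring
  refine IsBigO.trans (IsBigO.of_bound 1 (Eventually.of_forall fun t => ?_)) hsq
  have hr := hpos t j
  rw [one_mul, Real.norm_eq_abs, Real.norm_eq_abs,
    show R t j j * R t j j - 1 = (R t j j - 1) * (R t j j + 1) by ring, abs_mul,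
    abs_of_pos (by linarith : 0 < R t j j + 1)]
  nlinarith [abs_nonneg (R t j j - 1)]

theorem isBigO_apply_of_lt_of_transpose_mul_self {i j : n} (hij : i < j)
    (hcol : ∀ k ≤ i, (fun t => (R t - 1) k i) =O[l] g)
    (habove : ∀ k < i, (fun t => R t k j) =O[l] g) : (fun t => R t i j) =O[l] g := by
  have hcol' : ∀ k < i, (fun t => R t k i) =O[l] g := fun k hk =>
    (hcol k hk.le).congr_left fun t => by simp [one_apply_ne hk.ne]
  have hsum := isBigO_sum_mul_of_tendsto_zero {k | k < i} hg (by simpa using hcol')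
    (by simpa using habove)
  have hprod : (fun t => R t i i * R t i j) =O[l] g := by
    refine ((hgram i j).sub hsum).congr_left fun t => ?_
    simp only [Matrix.sub_apply, one_apply_ne hij.ne, (hR t).transpose_mul_self_apply]
    ring
  have hdiag : Tendsto (fun t => R t i i) l (𝓝 1) := by
    simpa using ((hcol i le_rfl).trans_tendsto hg).add_const 1
  have hinv : (fun t => (R t i i)⁻¹) =O[l] fun _ => (1 : ℝ) :=
    (hdiag.inv₀ one_ne_zero).isBigO_one ℝ
  refine (hprod.mul hinv).congr' ?_ (Eventually.of_forall fun t => mul_one (g t))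
  filter_upwards [hdiag.eventually_ne one_ne_zero] with t ht
  field_simp

theorem isBigO_sub_one_of_transpose_mul_self (hpos : ∀ t i, 0 < R t i i) (i j : n) :
    (fun t => (R t - 1) i j) =O[l] g := by
  rcases lt_or_ge j i with hji | hij
  · refine (isBigO_zero g l).congr_left fun t => ?_
    simp [hR t hji, one_apply_ne hji.ne']
  induction j using WellFoundedLT.induction generalizing i with
  | _ j ih =>
    have habove : ∀ k < j, (fun t => R t k j) =O[l] g := by
      intro k hk
      induction k using WellFoundedLT.induction with
      | _ k ihk =>
        exact isBigO_apply_of_lt_of_transpose_mul_self hg hR hgram hk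
          (fun k' hk' => ih k hk k' hk') fun k' hk' => ihk k' hk' (hk'.trans hk)
    rcases hij.lt_or_eq with hlt | rfl
    · exact (habove i hlt).congr_left fun t => by simp [one_apply_ne hlt.ne]
    · simpa using isBigO_diag_sub_one_of_transpose_mul_self hg hR hgram hpos i habove

end Cholesky

/-- Let `q(t)` be the orthogonal Q-factor of the unique QR-decomposition of
`I + tΩ` for a skew-symmetric `Ω`. Then `q(0) = I` and the derivative of
`t ↦ q(t)` at `t = 0` equals `Ω` (entrywise). -/
theorem qFactor_deriv_at_zero
    (m : ℕ) (Ω : Matrix (Fin m) (Fin m) ℝ) (hskew : Ωᵀ = -Ω)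
    (q R : ℝ → Matrix (Fin m) (Fin m) ℝ)
    (hq : ∀ t, (q t)ᵀ * q t = 1)
    (hR : ∀ t, (R t).BlockTriangular (id : Fin m → Fin m))
    (hRpos : ∀ t, ∀ i : Fin m, 0 < R t i i)
    (hQR : ∀ t, 1 + t • Ω = q t * R t) :
    q 0 = 1 ∧ ∀ i j : Fin m, HasDerivAt (fun t => q t i j) (Ω i j) 0 := by
  have hgram : ∀ t, (R t)ᵀ * R t - 1 = -(t ^ 2 • (Ω * Ω)) := fun t => by
    rw [transpose_mul_self_eq_of_eq_mul (hq t) (hQR t),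
      one_add_smul_transpose_mul_self_of_skew hskew, sub_sub_cancel_left]
  have hR1 := isBigO_sub_one_of_transpose_mul_self (g := fun t : ℝ => t ^ 2)
    (by simpa using (continuous_pow 2).tendsto (0 : ℝ)) hR
    (fun i j => ((isBigO_refl _ _).const_mul_left (-(Ω * Ω) i j)).congr_left fun t => by
      rw [hgram]; simp [mul_comm]) hRpos
  have hexpand : ∀ i j, (fun t => q t i j - (1 : Matrix (Fin m) (Fin m) ℝ) i j - t * Ω i j)
      =O[𝓝 0] fun t => t ^ 2 := fun i j => by
    have hbound : ∀ k, (fun t => q t i k) =O[𝓝 0] fun _ => (1 : ℝ) := fun k =>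
      IsBigO.of_bound 1 (Eventually.of_forall fun t => by
        simpa using entry_norm_bound_of_unitary (mem_unitaryGroup_iff'.2 (hq t)) i k)
    have hsum : (fun t => ∑ k, q t i k * (R t - 1) k j) =O[𝓝 0] fun t => t ^ 2 := by
      simpa using IsBigO.fun_sum (s := Finset.univ) fun k _ => (hbound k).mul (hR1 k j)
    refine hsum.neg_left.congr_left fun t => ?_
    rw [← mul_apply, Matrix.mul_sub, Matrix.mul_one, ← hQR]
    simp only [Matrix.sub_apply, Matrix.add_apply, Matrix.smul_apply, smul_eq_mul]
    ring
  have h := fun i j => eq_and_hasDerivAt_of_isBigO_sq (hexpand i j)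
  exact ⟨ext fun i j => (h i j).1, fun i j => (h i j).2⟩
end

section
/- The map α_{P,θ}(ξ) = θ q_{θᵀ[ξ,P]θ}(1) θᵀ P θ (q_{θᵀ[ξ,P]θ}(1))ᵀ θᵀ satisfies the retraction conditions: α_{P,θ}(0) = P, and d/dt|_{t=0} α_{P,θ}(tξ) = ξ for every ξ ∈ T_P Gr_{k,m}. -/
/-!
Put `Ψ = θᵀ[ξ,P]θ`, which is skew since `ξ` and `P` are symmetric. From `I + tΨ = q(t)R(t)` with
`q(t)` orthogonal we get `R(t)ᵀR(t) = (I + tΨ)ᵀ(I + tΨ) = I + t²ΨᵀΨ`. Solving this Cholesky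
equation row by row, using that `R(t)` is upper triangular with positive diagonal, gives
`R(t) = I + O(t²)`; as entries of orthogonal matrices are bounded by `1`,
`q(t) = I + tΨ - q(t)(R(t) - I) = I + tΨ + O(t²)`. Hence `Q(t) = θ q(t) θᵀ` satisfies `Q(0) = I`
and `Q'(0) = [ξ,P]`, and `α_{P,θ}(tξ) = Q(t) P Q(t)ᵀ` has derivative
`[ξ,P]P - P[ξ,P] = [P,[P,ξ]] = ξ` at `t = 0`.
-/

open Matrix Finset Filter Asymptotics Topology

section UpperTriangular

variable {ι : Type*} [Fintype ι] [LinearOrder ι] [LocallyFiniteOrderBot ι]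

theorem transpose_mul_self_apply_of_blockTriangular {α : Type*} [NonUnitalNonAssocSemiring α]
    {R : Matrix ι ι α} (hR : R.BlockTriangular id) (i j : ι) :
    (Rᵀ * R) i j = ∑ k ∈ Iio i, R k i * R k j + R i i * R i j := by
  rw [mul_apply, ← sum_subset (subset_univ (Iic i)), ← Iio_insert, sum_insert (by simp),
    add_comm]
  · rfl
  · intro k _ hk
    simp [hR (not_le.mp (mem_Iic.not.mp hk))]

variable [DecidableEq ι] {α : Type*} {l : Filter α} {g : α → ℝ} {R : α → Matrix ι ι ℝ}

theorem isBigO_sub_one_of_isBigO_transpose_mul_self_sub_one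
    (hR : ∀ a, (R a).BlockTriangular id) (hpos : ∀ a i, 0 < R a i i) (hg : Tendsto g l (𝓝 0))
    (hE : ∀ i j, (fun a => ((R a)ᵀ * R a - 1) i j) =O[l] g) (i j : ι) :
    (fun a => (R a - 1) i j) =O[l] g := by
  have hcol : ∀ k j, (fun a => R a k j) =O[l] fun _ => (1 : ℝ) := by
    intro k j
    have hsmall := (tendsto_order.1 ((hE j j).trans_tendsto hg)).2 1 one_pos
    refine IsBigO.of_bound 2 (hsmall.mono fun a ha => ?_)
    have hsq : R a k j * R a k j ≤ ∑ k', R a k' j * R a k' j :=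
      single_le_sum (f := fun k' => R a k' j * R a k' j) (fun _ _ => mul_self_nonneg _)
        (mem_univ k)
    have hnorm : ∑ k', R a k' j * R a k' j = 1 + ((R a)ᵀ * R a - 1) j j := by
      simp [mul_apply]
    rw [Real.norm_eq_abs, norm_one, mul_one, abs_le]
    constructor <;> nlinarith
  induction i using WellFoundedLT.induction generalizing j with
  | _ i IH =>
  have hoff : ∀ k < i, (fun a => R a k i) =O[l] g := fun k hk => by
    simpa [one_apply_ne hk.ne] using IH k hk i
  have hprod : ∀ j, (fun a => R a i i * R a i j - (1 : Matrix ι ι ℝ) i j) =O[l] g := by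
    intro j
    have hsplit : ∀ a, R a i i * R a i j - (1 : Matrix ι ι ℝ) i j =
        ((R a)ᵀ * R a - 1) i j - ∑ k ∈ Iio i, R a k i * R a k j := fun a => by
      rw [Matrix.sub_apply, transpose_mul_self_apply_of_blockTriangular (hR a)]; ring
    simp_rw [hsplit]
    refine (hE i j).sub (IsBigO.fun_sum fun k hk => ?_)
    simpa using (hoff k (mem_Iio.mp hk)).mul (hcol k j)
  have hdiag : (fun a => R a i i - 1) =O[l] g := by
    refine (IsBigO.of_bound 1 (Eventually.of_forall fun a => ?_)).trans (by simpa using hprod i)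
    have hfactor : R a i i * R a i i - 1 = (R a i i - 1) * (R a i i + 1) := by ring
    have hR1 : 1 ≤ |R a i i + 1| := by
      rw [abs_of_pos (by linarith [hpos a i])]; linarith [hpos a i]
    rw [Real.norm_eq_abs, Real.norm_eq_abs, one_mul, hfactor, abs_mul]
    nlinarith [abs_nonneg (R a i i - 1)]
  rcases lt_trichotomy j i with hji | rfl | hij
  · simpa [one_apply_ne hji.ne', hR _ hji] using isBigO_zero g l
  · simpa using hdiag
  · have hhalf : ∀ᶠ a in l, 1 / 2 ≤ R a i i := by
      have := (hdiag.trans_tendsto hg).add_const 1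
      simp only [sub_add_cancel, zero_add] at this
      exact (tendsto_order.1 this).1 _ (by norm_num) |>.mono fun _ h => h.le
    refine (IsBigO.of_bound 2 (hhalf.mono fun a ha => ?_)).trans
      (by simpa [one_apply_ne hij.ne] using hprod j)
    rw [Matrix.sub_apply, one_apply_ne hij.ne, sub_zero, Real.norm_eq_abs, Real.norm_eq_abs,
      abs_mul, abs_of_pos (hpos a i)]
    nlinarith [abs_nonneg (R a i j)]

end UpperTriangular

theorem abs_apply_le_one_of_transpose_mul_self {ι : Type*} [Fintype ι] [DecidableEq ι]
    {q : Matrix ι ι ℝ} (hq : qᵀ * q = 1) (i j : ι) : |q i j| ≤ 1 := by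
  have hU : q ∈ unitaryGroup ι ℝ := by
    rw [mem_unitaryGroup_iff', star_eq_conjTranspose, conjTranspose_eq_transpose_of_trivial, hq]
  exact entry_norm_bound_of_unitary hU i j

theorem hasDerivAt_of_isBigO_sq {𝕜 F : Type*} [NontriviallyNormedField 𝕜] [NormedAddCommGroup F]
    [NormedSpace 𝕜 F] {f : 𝕜 → F} {c a : F}
    (h : (fun t => f t - (c + t • a)) =O[𝓝 0] fun t => t ^ 2) : f 0 = c ∧ HasDerivAt f a 0 := by
  have hf0 : f 0 = c := by simpa [sub_eq_zero] using h.eq_zero_imp.self_of_nhds (by simp)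
  refine ⟨hf0, hasDerivAt_iff_isLittleO_nhds_zero.mpr ?_⟩
  simpa [hf0, sub_sub] using h.trans_isLittleO (isLittleO_pow_id one_lt_two)

theorem transpose_mul_self_sub_one_of_qr {ι : Type*} [Fintype ι] [DecidableEq ι] {𝕜 : Type*}
    [CommRing 𝕜] {Ψ q R : Matrix ι ι 𝕜} (hΨ : Ψᵀ = -Ψ) (hq : qᵀ * q = 1) (t : 𝕜)
    (hQR : 1 + t • Ψ = q * R) : Rᵀ * R - 1 = t ^ 2 • (Ψᵀ * Ψ) := by
  calc Rᵀ * R - 1 = (q * R)ᵀ * (q * R) - 1 := by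
        rw [transpose_mul, Matrix.mul_assoc, ← Matrix.mul_assoc qᵀ, hq, Matrix.one_mul]
    _ = (1 + t • Ψ)ᵀ * (1 + t • Ψ) - 1 := by rw [hQR]
    _ = t ^ 2 • (Ψᵀ * Ψ) := by
        rw [transpose_add, transpose_one, transpose_smul, hΨ]
        simp only [Matrix.add_mul, Matrix.mul_add, Matrix.one_mul, Matrix.mul_one, Matrix.neg_mul,
          Matrix.smul_mul, Matrix.mul_smul]
        module

theorem qr_orthogonal_factor_hasDerivAt {ι : Type*} [Fintype ι] [LinearOrder ι]
    [LocallyFiniteOrderBot ι] [DecidableEq ι] {Ψ : Matrix ι ι ℝ} (hΨ : Ψᵀ = -Ψ)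
    {q R : ℝ → Matrix ι ι ℝ} (hq : ∀ t, (q t)ᵀ * q t = 1)
    (hR : ∀ t, (R t).BlockTriangular id) (hRpos : ∀ t i, 0 < R t i i)
    (hQR : ∀ t, 1 + t • Ψ = q t * R t) :
    q 0 = 1 ∧ ∀ i j, HasDerivAt (fun t => q t i j) (Ψ i j) 0 := by
  have hsq : Tendsto (fun t : ℝ => t ^ 2) (𝓝 0) (𝓝 0) := by
    simpa using (continuous_pow 2).tendsto (0 : ℝ)
  have hRO := isBigO_sub_one_of_isBigO_transpose_mul_self_sub_one hR hRpos hsq fun i j => by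
    simp_rw [transpose_mul_self_sub_one_of_qr hΨ (hq _) _ (hQR _)]
    simpa [mul_comm] using isBigO_const_mul_self ((Ψᵀ * Ψ) i j) (fun t : ℝ => t ^ 2) (𝓝 0)
  have hqO : ∀ i j, (fun t => q t i j - ((1 : Matrix ι ι ℝ) i j + t • Ψ i j)) =O[𝓝 0]
      fun t => t ^ 2 := by
    intro i j
    have hsplit : ∀ t, q t i j - ((1 : Matrix ι ι ℝ) i j + t • Ψ i j) =
        -∑ k, q t i k * (R t - 1) k j := fun t => by
      have : q t - (1 + t • Ψ) = -(q t * (R t - 1)) := by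
        rw [hQR, Matrix.mul_sub, Matrix.mul_one]; abel
      simpa [mul_apply] using congrFun (congrFun this i) j
    simp_rw [hsplit]
    refine (IsBigO.fun_sum fun k _ => ?_).neg_left
    have hbdd : (fun t => q t i k) =O[𝓝 0] fun _ => (1 : ℝ) :=
      IsBigO.of_bound 1 (Eventually.of_forall fun t => by
        simpa using abs_apply_le_one_of_transpose_mul_self (hq t) i k)
    simpa using hbdd.mul (hRO k j)
  have h := fun i j => hasDerivAt_of_isBigO_sq (hqO i j)
  exact ⟨ext fun i j => (h i j).1, fun i j => (h i j).2⟩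

theorem hasDerivAt_matrix_mul_apply {𝕜 l m n : Type*} [NontriviallyNormedField 𝕜] [Fintype m]
    {M : 𝕜 → Matrix l m 𝕜} {N : 𝕜 → Matrix m n 𝕜} {M' : Matrix l m 𝕜} {N' : Matrix m n 𝕜}
    {t₀ : 𝕜} (hM : ∀ i j, HasDerivAt (fun t => M t i j) (M' i j) t₀)
    (hN : ∀ i j, HasDerivAt (fun t => N t i j) (N' i j) t₀) (i : l) (k : n) :
    HasDerivAt (fun t => (M t * N t) i k) ((M' * N t₀ + M t₀ * N') i k) t₀ := by
  simp only [mul_apply, Matrix.add_apply, ← sum_add_distrib]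
  exact HasDerivAt.fun_sum fun j _ => (hM i j).mul (hN j k)

section ConstantFactors

variable {𝕜 l m n p : Type*} [NontriviallyNormedField 𝕜] [Fintype m] [Fintype n] {t₀ : 𝕜}

theorem hasDerivAt_const_mul_mul_const_apply (A : Matrix l m 𝕜) (B : Matrix n p 𝕜)
    {M : 𝕜 → Matrix m n 𝕜} {M' : Matrix m n 𝕜}
    (hM : ∀ i j, HasDerivAt (fun t => M t i j) (M' i j) t₀) (i : l) (k : p) :
    HasDerivAt (fun t => (A * M t * B) i k) ((A * M' * B) i k) t₀ := by
  have hA : ∀ i j, HasDerivAt (fun _ => A i j) ((0 : Matrix l m 𝕜) i j) t₀ := fun i j => by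
    simpa using hasDerivAt_const t₀ (A i j)
  have hB : ∀ i j, HasDerivAt (fun _ => B i j) ((0 : Matrix n p 𝕜) i j) t₀ := fun i j => by
    simpa using hasDerivAt_const t₀ (B i j)
  simpa using hasDerivAt_matrix_mul_apply (hasDerivAt_matrix_mul_apply hA hM) hB i k

theorem hasDerivAt_mul_mul_transpose_apply (P : Matrix n n 𝕜) {Q : 𝕜 → Matrix l n 𝕜}
    {X : Matrix l n 𝕜} (hQ : ∀ i j, HasDerivAt (fun t => Q t i j) (X i j) t₀) (i k : l) :
    HasDerivAt (fun t => (Q t * P * (Q t)ᵀ) i k)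
      ((X * P * (Q t₀)ᵀ + Q t₀ * P * Xᵀ) i k) t₀ := by
  have hP : ∀ i j, HasDerivAt (fun _ => P i j) ((0 : Matrix n n 𝕜) i j) t₀ := fun i j => by
    simpa using hasDerivAt_const t₀ (P i j)
  simpa using hasDerivAt_matrix_mul_apply (N := fun t => (Q t)ᵀ) (N' := Xᵀ)
    (hasDerivAt_matrix_mul_apply hQ hP) (fun i j => hQ j i) i k

end ConstantFactors

theorem commutator_commutator_eq_self {A : Type*} [Ring A] {p ω ξ : A} (hp : p * p = p)
    (hξ : ξ = p * ω - ω * p) : (ξ * p - p * ξ) * p - p * (ξ * p - p * ξ) = ξ := by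
  have hp' : ∀ x, p * (p * x) = p * x := fun x => by rw [← mul_assoc, hp]
  subst hξ
  simp only [sub_mul, mul_sub, mul_assoc, hp, hp']
  abel

/-- The map `α_{P,θ}` satisfies the retraction conditions: `α_{P,θ}(0) = P`
and `d/dt|_{t=0} α_{P,θ}(tξ) = ξ` for every tangent vector `ξ = [P,Ω]`.
Here `q t` is the orthogonal Q-factor of `I + θᵀ[tξ,P]θ = I + t • θᵀ[ξ,P]θ`,
so that `α_{P,θ}(tξ) = θ (q t) θᵀ P θ (q t)ᵀ θᵀ`. -/
theorem retraction_conditions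
    (m : ℕ) (P θ Ω : Matrix (Fin m) (Fin m) ℝ)
    (hproj : P * P = P) (hsym : Pᵀ = P) (hθ : θᵀ * θ = 1) (hskew : Ωᵀ = -Ω)
    (ξ : Matrix (Fin m) (Fin m) ℝ) (hξ : ξ = P * Ω - Ω * P)
    (q R : ℝ → Matrix (Fin m) (Fin m) ℝ)
    (hq : ∀ t, (q t)ᵀ * q t = 1)
    (hR : ∀ t, (R t).BlockTriangular (id : Fin m → Fin m))
    (hRpos : ∀ t, ∀ i : Fin m, 0 < R t i i)
    (hQR : ∀ t : ℝ, 1 + t • (θᵀ * (ξ * P - P * ξ) * θ) = q t * R t) :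
    θ * q 0 * θᵀ * P * θ * (q 0)ᵀ * θᵀ = P ∧
    ∀ i j : Fin m,
      HasDerivAt (fun t => (θ * q t * θᵀ * P * θ * (q t)ᵀ * θᵀ) i j) (ξ i j) 0 := by
  have hθθ : θ * θᵀ = 1 := mul_eq_one_comm.mp hθ
  have hξsym : ξᵀ = ξ := by
    rw [hξ, transpose_sub, transpose_mul, transpose_mul, hsym, hskew]
    noncomm_ring
  set X := ξ * P - P * ξ with hX
  have hXskew : Xᵀ = -X := by
    rw [hX, transpose_sub, transpose_mul, transpose_mul, hsym, hξsym, neg_sub]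
  have hΨskew : (θᵀ * X * θ)ᵀ = -(θᵀ * X * θ) := by
    rw [transpose_mul, transpose_mul, transpose_transpose, hXskew]; noncomm_ring
  obtain ⟨hq0, hq_deriv⟩ := qr_orthogonal_factor_hasDerivAt hΨskew hq hR hRpos hQR
  have hQ : ∀ i j, HasDerivAt (fun t => (θ * q t * θᵀ) i j) (X i j) 0 := by
    simpa [← Matrix.mul_assoc, hθθ, Matrix.mul_assoc _ θ θᵀ] using
      hasDerivAt_const_mul_mul_const_apply θ θᵀ hq_deriv
  have hα_eq : ∀ t, θ * q t * θᵀ * P * θ * (q t)ᵀ * θᵀ = θ * q t * θᵀ * P * (θ * q t * θᵀ)ᵀ := by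
    simp [transpose_mul, Matrix.mul_assoc]
  have hQ0 : θ * q 0 * θᵀ = 1 := by rw [hq0, Matrix.mul_one, hθθ]
  have hα_deriv : X * P * (θ * q 0 * θᵀ)ᵀ + θ * q 0 * θᵀ * P * Xᵀ = ξ := by
    rw [hQ0, transpose_one, Matrix.mul_one, Matrix.one_mul, hXskew, Matrix.mul_neg,
      ← sub_eq_add_neg, commutator_commutator_eq_self hproj hξ]
  refine ⟨by rw [hα_eq, hQ0, transpose_one, Matrix.one_mul, Matrix.mul_one], fun i j => ?_⟩
  simpa only [hα_eq, hα_deriv] using hasDerivAt_mul_mul_transpose_apply P hQ i j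
end

section
/- In the setting of Lemma 3 of the paper: let P = UUᵀ with V = [U|U^⊥] ∈ O(m), ξ ∈ T_P Gr_{k,m} with A = con_V(ξ), QR-decompose A = θ_A [R;0], set θ = V diag(I_k, θ_A), and let θ_M ∈ O(2k) be the Q-factor of M(R) = [[I_k,−Rᵀ],[R,I_k]]. Then the matrix Ũ := θ diag(θ_M, I_{m−2k}) [I_k; 0] lies in St_{k,m} and satisfies α_{P,θ}(ξ) = Ũ Ũᵀ, where α_{P,θ} is the retraction of Lemma 1. -/
/-!
In the frame `θ = [U | U⊥] · diag(1, θ_A)` the projector `P` becomes `diag(I_k, 0)` and the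
tangent vector `ξ` becomes `[[0, Xᵀ], [X, 0]]` with `X = [R; 0]`, so
`I + θᵀ[ξ, P]θ = [[I, -Xᵀ], [X, I]]`. After regrouping the index blocks as `(k ⊕ k) ⊕ j` this is
`diag(M(R), I)`, whose QR decomposition is `diag(θ_M, I) · diag(R_M, I)`. By uniqueness of QR
decompositions with positive diagonal, `q = diag(θ_M, I)`, hence
`α_{P,θ}(ξ) = θ q diag(I_k, 0) qᵀ θᵀ = Ũ Ũᵀ`.
-/

open Matrix Function

/-- Weight function realizing the natural linear order on `Fin k ⊕ Fin k`. -/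
def wt2 (k : ℕ) : Fin k ⊕ Fin k → ℕ :=
  Sum.elim (fun i => (i : ℕ)) (fun i => k + (i : ℕ))

/-- Weight function realizing the natural linear order on
`Fin k ⊕ (Fin k ⊕ Fin j)`. -/
def wt3 (k j : ℕ) : Fin k ⊕ (Fin k ⊕ Fin j) → ℕ :=
  Sum.elim (fun i => (i : ℕ)) (Sum.elim (fun i => k + (i : ℕ)) (fun i => k + k + (i : ℕ)))

namespace Matrix

section Triangular

variable {n α R K : Type*} [Fintype n] [LinearOrder α] {b : n → α}

theorem BlockTriangular.det_of_injective [DecidableEq n] [CommRing R] {M : Matrix n n R}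
    (hM : M.BlockTriangular b) (hb : Injective b) : M.det = ∏ i, M i i := by
  -- for the order pulled back along `b`, `M.BlockTriangular b` is literally `M.IsUpperTriangular`
  let _ : LinearOrder n := LinearOrder.lift' b hb
  exact det_of_isUpperTriangular hM

theorem BlockTriangular.mul_apply_self_of_injective [Semiring R] {A B : Matrix n n R}
    (hA : A.BlockTriangular b) (hB : B.BlockTriangular b) (hb : Injective b) (i : n) :
    (A * B) i i = A i i * B i i := by
  rw [mul_apply, Finset.sum_eq_single i (fun l _ hl => ?_) (by simp)]
  rcases (hb.ne hl).lt_or_gt with h | h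
  · rw [hA h, zero_mul]
  · rw [hB h, mul_zero]

variable [DecidableEq n] [Field K] [LinearOrder K] [IsStrictOrderedRing K]

theorem BlockTriangular.eq_one_of_transpose_mul_self_eq_one {T : Matrix n n K}
    (hT : T.BlockTriangular b) (hb : Injective b) (horth : Tᵀ * T = 1) (hpos : ∀ i, 0 < T i i) :
    T = 1 := by
  have : Invertible T := invertibleOfLeftInverse T Tᵀ horth
  have hTt : Tᵀ.BlockTriangular b :=
    inv_eq_left_inv horth ▸ blockTriangular_inv_of_blockTriangular hT
  ext i l
  rcases eq_or_ne i l with rfl | hil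
  · have hsq : T i i * T i i = 1 := by
      simpa [hTt.mul_apply_self_of_injective hT hb] using congrFun (congrFun horth i) i
    rw [one_apply_eq, (mul_self_eq_one_iff.mp hsq).resolve_right (by linarith [hpos i])]
  · rw [one_apply_ne hil]
    rcases (hb.ne hil).lt_or_gt with h | h
    · exact hTt h
    · exact hT h

theorem eq_of_mul_eq_mul_of_blockTriangular {Q₁ Q₂ R₁ R₂ : Matrix n n K} (hb : Injective b)
    (hQ₁ : Q₁ᵀ * Q₁ = 1) (hQ₂ : Q₂ᵀ * Q₂ = 1)
    (hR₁ : R₁.BlockTriangular b) (hR₂ : R₂.BlockTriangular b)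
    (hpos₁ : ∀ i, 0 < R₁ i i) (hpos₂ : ∀ i, 0 < R₂ i i)
    (h : Q₁ * R₁ = Q₂ * R₂) : Q₁ = Q₂ := by
  have : Invertible R₁ := invertibleOfIsUnitDet R₁ <| by
    rw [hR₁.det_of_injective hb]
    exact (Finset.prod_pos fun i _ => hpos₁ i).ne'.isUnit
  have hQ₂' : Q₂ * Q₂ᵀ = 1 := mul_eq_one_comm.mp hQ₂
  set T := Q₂ᵀ * Q₁
  have hTR : T * R₁ = R₂ := by
    rw [Matrix.mul_assoc, h, ← Matrix.mul_assoc, hQ₂, Matrix.one_mul]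
  have hT : T.BlockTriangular b := by
    rw [← mul_inv_cancel_right_of_invertible R₁ T, hTR]
    exact hR₂.mul (blockTriangular_inv_of_blockTriangular hR₁)
  have horth : Tᵀ * T = 1 := by
    rw [transpose_mul, transpose_transpose, Matrix.mul_assoc, ← Matrix.mul_assoc Q₂, hQ₂',
      Matrix.one_mul, hQ₁]
  have hpos (i : n) : 0 < T i i := by
    have := hT.mul_apply_self_of_injective hR₁ hb i
    rw [hTR] at this
    exact pos_of_mul_pos_left (this ▸ hpos₂ i) (hpos₁ i).le
  calc Q₁ = Q₂ * T := by rw [← Matrix.mul_assoc, hQ₂', Matrix.one_mul]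
    _ = Q₂ := by rw [hT.eq_one_of_transpose_mul_self_eq_one hb horth hpos, Matrix.mul_one]

end Triangular

section Orthogonal

variable {m n p R : Type*} [CommRing R]

theorem transpose_mul_self_mul_eq_one [Fintype m] [Fintype n] [DecidableEq n] [DecidableEq p]
    {Q : Matrix m n R} {E : Matrix n p R} (hQ : Qᵀ * Q = 1) (hE : Eᵀ * E = 1) :
    (Q * E)ᵀ * (Q * E) = 1 := by
  rw [transpose_mul, Matrix.mul_assoc, ← Matrix.mul_assoc Qᵀ, hQ, Matrix.one_mul, hE]

theorem transpose_mul_self_fromCols_eq_one [Fintype m] [DecidableEq n] [DecidableEq p]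
    {U : Matrix m n R} {W : Matrix m p R} (hU : Uᵀ * U = 1) (hW : Wᵀ * W = 1)
    (hUW : Uᵀ * W = 0) : (fromCols U W)ᵀ * fromCols U W = 1 := by
  have hWU : Wᵀ * U = 0 := by simpa using congrArg transpose hUW
  rw [transpose_fromCols, fromRows_mul_fromCols, hU, hW, hUW, hWU, fromBlocks_one]

theorem transpose_mul_self_fromBlocks_eq_one [Fintype n] [Fintype p] [DecidableEq n]
    [DecidableEq p] {Q : Matrix n n R} {G : Matrix p p R} (hQ : Qᵀ * Q = 1) (hG : Gᵀ * G = 1) :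
    (fromBlocks Q 0 0 G)ᵀ * fromBlocks Q 0 0 G = 1 := by
  simp [fromBlocks_transpose, fromBlocks_multiply, hQ, hG]

theorem transpose_mul_self_submatrix_eq_one [Fintype n] [Fintype p] [DecidableEq n]
    [DecidableEq p] {Q : Matrix n n R} (e : p ≃ n) (hQ : Qᵀ * Q = 1) :
    (Q.submatrix e e)ᵀ * Q.submatrix e e = 1 := by
  rw [transpose_submatrix, submatrix_mul_equiv, hQ, submatrix_one_equiv]

theorem transpose_mul_mul_mul_eq_of_mul_transpose_eq_one [Fintype m] [DecidableEq m]
    {θ : Matrix m m R} (hθ : θ * θᵀ = 1) (M N : Matrix m m R) :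
    θᵀ * (M * N) * θ = (θᵀ * M * θ) * (θᵀ * N * θ) := by
  simp only [Matrix.mul_assoc]
  rw [← Matrix.mul_assoc θ θᵀ, hθ, Matrix.one_mul]

theorem transpose_mul_mul_mul [Fintype m] [Fintype n] (V : Matrix m n R) (D : Matrix n p R)
    (M : Matrix m m R) : (V * D)ᵀ * M * (V * D) = Dᵀ * (Vᵀ * M * V) * D := by
  simp only [transpose_mul, Matrix.mul_assoc]

theorem transpose_mul_self_fromRows_one_zero [Fintype n] [Fintype p] [DecidableEq n] :
    (fromRows (1 : Matrix n n R) (0 : Matrix p n R))ᵀ *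
      fromRows (1 : Matrix n n R) (0 : Matrix p n R) = 1 := by
  simp [transpose_fromRows, fromCols_mul_fromRows]

theorem fromRows_one_zero_mul_transpose_self [Fintype n] [DecidableEq n] :
    fromRows (1 : Matrix n n R) (0 : Matrix p n R) *
      (fromRows (1 : Matrix n n R) (0 : Matrix p n R))ᵀ = fromBlocks 1 0 0 0 := by
  rw [transpose_fromRows, fromRows_mul_fromCols]
  simp

end Orthogonal

section Frame

variable {m n p R : Type*} [Fintype m] [CommRing R] {U : Matrix m n R} {W : Matrix m p R}

theorem transpose_fromCols_mul_mul_fromCols (M : Matrix m m R) :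
    (fromCols U W)ᵀ * M * fromCols U W =
      fromBlocks (Uᵀ * M * U) (Uᵀ * M * W) (Wᵀ * M * U) (Wᵀ * M * W) := by
  rw [transpose_fromCols, fromRows_mul, fromRows_mul_fromCols]

theorem IsSymm.mul_sub_mul_of_transpose_eq_neg {P Ω : Matrix m m R} (hP : P.IsSymm)
    (hΩ : Ωᵀ = -Ω) : (P * Ω - Ω * P).IsSymm := by
  rw [IsSymm, transpose_sub, transpose_mul, transpose_mul, hP.eq, hΩ, Matrix.neg_mul,
    Matrix.mul_neg, sub_neg_eq_add, neg_add_eq_sub]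

variable [Fintype n] [DecidableEq n]

theorem transpose_fromCols_mul_projection_mul_fromCols (hU : Uᵀ * U = 1) (hUW : Uᵀ * W = 0) :
    (fromCols U W)ᵀ * (U * Uᵀ) * fromCols U W = fromBlocks 1 0 0 0 := by
  have hWU : Wᵀ * U = 0 := by simpa using congrArg transpose hUW
  rw [transpose_fromCols_mul_mul_fromCols]
  simp [← Matrix.mul_assoc, hU, hUW, hWU]

theorem transpose_fromCols_mul_tangent_mul_fromCols {Ω ξ : Matrix m m R} (hU : Uᵀ * U = 1)
    (hUW : Uᵀ * W = 0) (hΩ : Ωᵀ = -Ω) (hξ : ξ = U * Uᵀ * Ω - Ω * (U * Uᵀ)) :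
    (fromCols U W)ᵀ * ξ * fromCols U W = fromBlocks 0 (Wᵀ * ξ * U)ᵀ (Wᵀ * ξ * U) 0 := by
  have hWU : Wᵀ * U = 0 := by simpa using congrArg transpose hUW
  have hξ_symm : ξᵀ = ξ := by
    have hP : (U * Uᵀ).IsSymm := by rw [IsSymm, transpose_mul, transpose_transpose]
    rw [hξ]
    exact (hP.mul_sub_mul_of_transpose_eq_neg hΩ).eq
  -- every term of `Uᵀ ξ U` and `Wᵀ ξ W` cancels at its left or at its right end
  have hUξU : Uᵀ * ξ * U = 0 := by
    simp only [hξ, Matrix.mul_sub, Matrix.sub_mul, ← Matrix.mul_assoc, hU, Matrix.one_mul]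
    simp [Matrix.mul_assoc, hU]
  have hWξW : Wᵀ * ξ * W = 0 := by
    simp only [hξ, Matrix.mul_sub, Matrix.sub_mul, ← Matrix.mul_assoc, hWU, Matrix.zero_mul]
    simp [Matrix.mul_assoc, hUW]
  rw [transpose_fromCols_mul_mul_fromCols, hUξU, hWξW, transpose_mul, transpose_mul,
    transpose_transpose, hξ_symm, Matrix.mul_assoc, Matrix.mul_assoc]

variable [Fintype p] [DecidableEq p]

theorem transpose_fromBlocks_mul_fromBlocks_mul_fromBlocks (G : Matrix p p R)
    (Z : Matrix n n R) (A : Matrix p n R) :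
    (fromBlocks 1 0 0 G)ᵀ * fromBlocks Z Aᵀ A 0 * fromBlocks 1 0 0 G =
      fromBlocks Z (Gᵀ * A)ᵀ (Gᵀ * A) 0 := by
  simp [fromBlocks_transpose, fromBlocks_multiply, transpose_mul]

theorem frame_transpose_mul_self_eq_one {G : Matrix p p R} {θ : Matrix m (n ⊕ p) R}
    (hθ : θ = fromCols U W * (fromBlocks 1 0 0 G : Matrix (n ⊕ p) _ R))
    (hU : Uᵀ * U = 1) (hW : Wᵀ * W = 1) (hUW : Uᵀ * W = 0) (hG : Gᵀ * G = 1) :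
    θᵀ * θ = 1 := by
  rw [hθ]
  exact transpose_mul_self_mul_eq_one (transpose_mul_self_fromCols_eq_one hU hW hUW)
    (transpose_mul_self_fromBlocks_eq_one (by simp) hG)

theorem frame_transpose_mul_projection_mul_frame {G : Matrix p p R}
    {θ : Matrix m (n ⊕ p) R}
    (hθ : θ = fromCols U W * (fromBlocks 1 0 0 G : Matrix (n ⊕ p) _ R))
    (hU : Uᵀ * U = 1) (hUW : Uᵀ * W = 0) :
    θᵀ * (U * Uᵀ) * θ = fromBlocks 1 0 0 0 := by
  rw [hθ, transpose_mul_mul_mul, transpose_fromCols_mul_projection_mul_fromCols hU hUW]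
  simpa using transpose_fromBlocks_mul_fromBlocks_mul_fromBlocks G 1 0

theorem frame_transpose_mul_tangent_mul_frame {G : Matrix p p R} {Ω ξ : Matrix m m R}
    {θ : Matrix m (n ⊕ p) R}
    (hθ : θ = fromCols U W * (fromBlocks 1 0 0 G : Matrix (n ⊕ p) _ R))
    (hU : Uᵀ * U = 1) (hUW : Uᵀ * W = 0) (hΩ : Ωᵀ = -Ω)
    (hξ : ξ = U * Uᵀ * Ω - Ω * (U * Uᵀ)) :
    θᵀ * ξ * θ = fromBlocks 0 (Gᵀ * (Wᵀ * ξ * U))ᵀ (Gᵀ * (Wᵀ * ξ * U)) 0 := by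
  rw [hθ, transpose_mul_mul_mul, transpose_fromCols_mul_tangent_mul_fromCols hU hUW hΩ hξ,
    transpose_fromBlocks_mul_fromBlocks_mul_fromBlocks]

theorem one_add_fromBlocks_mul_sub_mul (X : Matrix p n R) :
    1 + (fromBlocks 0 Xᵀ X 0 * fromBlocks 1 0 0 0 - fromBlocks 1 0 0 0 * fromBlocks 0 Xᵀ X 0) =
      fromBlocks 1 (-Xᵀ) X (1 : Matrix p p R) := by
  rw [fromBlocks_multiply, fromBlocks_multiply, ← fromBlocks_one, sub_eq_add_neg, fromBlocks_neg,
    fromBlocks_add, fromBlocks_add]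
  simp

end Frame

section Reassoc

variable {a b c a' b' c' n R : Type*}

theorem submatrix_sumAssoc_fromBlocks_fromBlocks [Zero R] (A : Matrix a a' R)
    (B : Matrix a b' R) (C : Matrix b a' R) (D : Matrix b b' R) (F : Matrix c c' R) :
    (fromBlocks (fromBlocks A B C D) 0 0 F).submatrix (Equiv.sumAssoc a b c).symm
        (Equiv.sumAssoc a' b' c').symm =
      fromBlocks A (fromCols B 0) (fromRows C 0) (fromBlocks D 0 0 F) := by
  ext (i | i | i) (l | l | l) <;> rfl

theorem submatrix_sumAssoc_fromRows_fromRows (A : Matrix a n R) (B : Matrix b n R)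
    (C : Matrix c n R) :
    (fromRows (fromRows A B) C).submatrix (Equiv.sumAssoc a b c).symm id =
      fromRows A (fromRows B C) := by
  ext (i | i | i) l <;> rfl

theorem BlockTriangular.fromBlocks_zero_zero {α : Type*} [LT α] [Zero R] {A : Matrix a a R}
    {D : Matrix c c R} {b₁ : a → α} {b₂ : c → α} (hA : A.BlockTriangular b₁)
    (hD : D.BlockTriangular b₂) : (fromBlocks A 0 0 D).BlockTriangular (Sum.elim b₁ b₂) := by
  rintro (i | i) (l | l) h
  exacts [hA h, rfl, rfl, hD h]

end Reassoc

end Matrix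

theorem wt3_injective (k j : ℕ) : Injective (wt3 k j) := by
  rintro (x | x | x) (y | y | y) h <;> simp [wt3, Fin.ext_iff] at h ⊢ <;> omega

theorem wt3_eq_comp (k j : ℕ) :
    wt3 k j = Sum.elim (wt2 k) (fun i : Fin j => k + k + (i : ℕ)) ∘
      (Equiv.sumAssoc (Fin k) (Fin k) (Fin j)).symm := by
  ext (i | i | i) <;> rfl

theorem qFactor_eq_submatrix_fromBlocks {K : Type*} [Field K] [LinearOrder K]
    [IsStrictOrderedRing K] {k j : ℕ} {R : Matrix (Fin k) (Fin k) K}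
    {θM RM : Matrix (Fin k ⊕ Fin k) (Fin k ⊕ Fin k) K} (hθM : θMᵀ * θM = 1)
    (hRM : RM.BlockTriangular (wt2 k)) (hRMpos : ∀ i, 0 < RM i i)
    (hθMRM : fromBlocks 1 (-Rᵀ) R 1 = θM * RM)
    {q Rq : Matrix (Fin k ⊕ (Fin k ⊕ Fin j)) (Fin k ⊕ (Fin k ⊕ Fin j)) K} (hq : qᵀ * q = 1)
    (hRq : Rq.BlockTriangular (wt3 k j)) (hRqpos : ∀ i, 0 < Rq i i)
    (hqRq : fromBlocks 1 (-(fromRows R (0 : Matrix (Fin j) (Fin k) K))ᵀ) (fromRows R 0) 1 =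
      q * Rq) :
    q = (fromBlocks θM 0 0 (1 : Matrix (Fin j) (Fin j) K)).submatrix
      (Equiv.sumAssoc (Fin k) (Fin k) (Fin j)).symm
      (Equiv.sumAssoc (Fin k) (Fin k) (Fin j)).symm := by
  let e := Equiv.sumAssoc (Fin k) (Fin k) (Fin j)
  refine eq_of_mul_eq_mul_of_blockTriangular (wt3_injective k j) hq
    (transpose_mul_self_submatrix_eq_one _ (transpose_mul_self_fromBlocks_eq_one hθM (by simp)))
    hRq (R₂ := (fromBlocks RM 0 0 (1 : Matrix (Fin j) (Fin j) K)).submatrix e.symm e.symm)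
    ?_ hRqpos ?_ ?_
  · rw [wt3_eq_comp]
    exact (hRM.fromBlocks_zero_zero blockTriangular_one).submatrix
  · rintro (i | i | i) <;> simp [e, hRMpos]
  · rw [← hqRq, submatrix_mul_equiv, fromBlocks_multiply, ← hθMRM]
    simp [e, submatrix_sumAssoc_fromBlocks_fromBlocks, transpose_fromRows, fromCols_neg]

theorem retraction_via_stiefel_update_general
    (k j : ℕ)
    (U : Matrix (Fin k ⊕ (Fin k ⊕ Fin j)) (Fin k) ℝ)
    (Uperp : Matrix (Fin k ⊕ (Fin k ⊕ Fin j)) (Fin k ⊕ Fin j) ℝ)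
    (hU : Uᵀ * U = 1) (hUperp : Uperpᵀ * Uperp = 1) (horth : Uᵀ * Uperp = 0)
    (P : Matrix (Fin k ⊕ (Fin k ⊕ Fin j)) (Fin k ⊕ (Fin k ⊕ Fin j)) ℝ)
    (hP : P = U * Uᵀ)
    (V : Matrix (Fin k ⊕ (Fin k ⊕ Fin j)) (Fin k ⊕ (Fin k ⊕ Fin j)) ℝ)
    (hV : V = fromCols U Uperp)
    (Ω ξ : Matrix (Fin k ⊕ (Fin k ⊕ Fin j)) (Fin k ⊕ (Fin k ⊕ Fin j)) ℝ)
    (hΩ : Ωᵀ = -Ω) (hξ : ξ = P * Ω - Ω * P)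
    (A : Matrix (Fin k ⊕ Fin j) (Fin k) ℝ) (hA : A = Uperpᵀ * ξ * U)
    (θA : Matrix (Fin k ⊕ Fin j) (Fin k ⊕ Fin j) ℝ)
    (R : Matrix (Fin k) (Fin k) ℝ)
    (hθA : θAᵀ * θA = 1)
    (hAQR : A = θA * fromRows R 0)
    (θ : Matrix (Fin k ⊕ (Fin k ⊕ Fin j)) (Fin k ⊕ (Fin k ⊕ Fin j)) ℝ)
    (hθ : θ = V * fromBlocks 1 0 0 θA)
    (θM : Matrix (Fin k ⊕ Fin k) (Fin k ⊕ Fin k) ℝ)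
    (hθM : θMᵀ * θM = 1)
    (hθMQR : ∃ RM : Matrix (Fin k ⊕ Fin k) (Fin k ⊕ Fin k) ℝ,
        RM.BlockTriangular (wt2 k) ∧ (∀ i, 0 < RM i i) ∧
        fromBlocks 1 (-Rᵀ) R 1 = θM * RM)
    (q : Matrix (Fin k ⊕ (Fin k ⊕ Fin j)) (Fin k ⊕ (Fin k ⊕ Fin j)) ℝ)
    (hq : qᵀ * q = 1)
    (hqQR : ∃ Rq : Matrix (Fin k ⊕ (Fin k ⊕ Fin j)) (Fin k ⊕ (Fin k ⊕ Fin j)) ℝ,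
        Rq.BlockTriangular (wt3 k j) ∧ (∀ i, 0 < Rq i i) ∧
        1 + θᵀ * (ξ * P - P * ξ) * θ = q * Rq)
    (Utilde : Matrix (Fin k ⊕ (Fin k ⊕ Fin j)) (Fin k) ℝ)
    (hUtilde : Utilde =
      θ *
        ((fromBlocks θM 0 0 (1 : Matrix (Fin j) (Fin j) ℝ)).submatrix
          (Equiv.sumAssoc (Fin k) (Fin k) (Fin j)).symm
          (Equiv.sumAssoc (Fin k) (Fin k) (Fin j)).symm) *
        ((fromRows (fromRows (1 : Matrix (Fin k) (Fin k) ℝ) (0 : Matrix (Fin k) (Fin k) ℝ))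
            (0 : Matrix (Fin j) (Fin k) ℝ)).submatrix
          (Equiv.sumAssoc (Fin k) (Fin k) (Fin j)).symm id)) :
    Utildeᵀ * Utilde = 1 ∧
    θ * q * θᵀ * P * θ * qᵀ * θᵀ = Utilde * Utildeᵀ := by
  obtain ⟨RM, hRM, hRMpos, hθMRM⟩ := hθMQR
  obtain ⟨Rq, hRq, hRqpos, hqRq⟩ := hqQR
  subst hP hV
  have hθ_orth := frame_transpose_mul_self_eq_one hθ hU hUperp horth hθA
  have hPθ := frame_transpose_mul_projection_mul_frame hθ hU horth
  -- `hAQR` is elaborated with the `CStarMatrix` product, so it is used up to defeq only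
  have hX : θAᵀ * A = fromRows R 0 := by
    rw [hAQR]
    exact (Matrix.mul_assoc _ _ _).symm.trans (by rw [hθA, Matrix.one_mul])
  have hξθ := frame_transpose_mul_tangent_mul_frame hθ hU horth hΩ hξ
  rw [← hA, hX] at hξθ
  have hqS := qFactor_eq_submatrix_fromBlocks hθM hRM hRMpos hθMRM hq hRq hRqpos <| by
    rw [← hqRq, Matrix.mul_sub, Matrix.sub_mul,
      transpose_mul_mul_mul_eq_of_mul_transpose_eq_one (mul_eq_one_comm.mp hθ_orth),
      transpose_mul_mul_mul_eq_of_mul_transpose_eq_one (mul_eq_one_comm.mp hθ_orth), hPθ, hξθ,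
      one_add_fromBlocks_mul_sub_mul]
  rw [submatrix_sumAssoc_fromRows_fromRows, fromRows_zero, ← hqS] at hUtilde
  subst hUtilde
  refine ⟨transpose_mul_self_mul_eq_one (transpose_mul_self_mul_eq_one hθ_orth hq)
    transpose_mul_self_fromRows_one_zero, ?_⟩
  calc θ * q * θᵀ * (U * Uᵀ) * θ * qᵀ * θᵀ
        = θ * q * (θᵀ * (U * Uᵀ) * θ) * qᵀ * θᵀ := by simp only [Matrix.mul_assoc]
    _ = _ := by
        rw [hPθ, ← fromRows_one_zero_mul_transpose_self]
        simp only [transpose_mul, Matrix.mul_assoc]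

/-- Lemma 3 of the paper: with `P = UUᵀ`, `V = [U | U^⊥]`, a tangent vector
`ξ` with coordinates `A = con_V(ξ)`, QR-decomposition `A = θ_A [R; 0]`,
`θ = V diag(I_k, θ_A)`, and `θ_M` the orthogonal Q-factor of
`M(R) = [[I_k, −Rᵀ],[R, I_k]]`, the Stiefel matrix
`Ũ = θ diag(θ_M, I_{m−2k}) [I_k; 0]` satisfies `α_{P,θ}(ξ) = Ũ Ũᵀ`,
where `α_{P,θ}(ξ) = θ q θᵀ P θ qᵀ θᵀ` and `q` is the orthogonal Q-factor of
`I + θᵀ[ξ,P]θ`. The ambient index set `Fin k ⊕ (Fin k ⊕ Fin j)` realizes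
dimension `m = 2k + j`, i.e. `m ≥ 2k`. -/
theorem retraction_via_stiefel_update
    (k j : ℕ)
    (U : Matrix (Fin k ⊕ (Fin k ⊕ Fin j)) (Fin k) ℝ)
    (Uperp : Matrix (Fin k ⊕ (Fin k ⊕ Fin j)) (Fin k ⊕ Fin j) ℝ)
    (hU : Uᵀ * U = 1) (hUperp : Uperpᵀ * Uperp = 1) (horth : Uᵀ * Uperp = 0)
    (hspan : U * Uᵀ + Uperp * Uperpᵀ = 1)
    (P : Matrix (Fin k ⊕ (Fin k ⊕ Fin j)) (Fin k ⊕ (Fin k ⊕ Fin j)) ℝ)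
    (hP : P = U * Uᵀ)
    (V : Matrix (Fin k ⊕ (Fin k ⊕ Fin j)) (Fin k ⊕ (Fin k ⊕ Fin j)) ℝ)
    (hV : V = fromCols U Uperp)
    (Ω ξ : Matrix (Fin k ⊕ (Fin k ⊕ Fin j)) (Fin k ⊕ (Fin k ⊕ Fin j)) ℝ)
    (hΩ : Ωᵀ = -Ω) (hξ : ξ = P * Ω - Ω * P)
    (A : Matrix (Fin k ⊕ Fin j) (Fin k) ℝ) (hA : A = Uperpᵀ * ξ * U)
    (θA : Matrix (Fin k ⊕ Fin j) (Fin k ⊕ Fin j) ℝ)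
    (R : Matrix (Fin k) (Fin k) ℝ)
    (hθA : θAᵀ * θA = 1) (hR : R.BlockTriangular (id : Fin k → Fin k))
    (hAQR : A = θA * fromRows R 0)
    (θ : Matrix (Fin k ⊕ (Fin k ⊕ Fin j)) (Fin k ⊕ (Fin k ⊕ Fin j)) ℝ)
    (hθ : θ = V * fromBlocks 1 0 0 θA)
    (θM : Matrix (Fin k ⊕ Fin k) (Fin k ⊕ Fin k) ℝ)
    (hθM : θMᵀ * θM = 1)
    (hθMQR : ∃ RM : Matrix (Fin k ⊕ Fin k) (Fin k ⊕ Fin k) ℝ,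
        RM.BlockTriangular (wt2 k) ∧ (∀ i, 0 < RM i i) ∧
        fromBlocks 1 (-Rᵀ) R 1 = θM * RM)
    (q : Matrix (Fin k ⊕ (Fin k ⊕ Fin j)) (Fin k ⊕ (Fin k ⊕ Fin j)) ℝ)
    (hq : qᵀ * q = 1)
    (hqQR : ∃ Rq : Matrix (Fin k ⊕ (Fin k ⊕ Fin j)) (Fin k ⊕ (Fin k ⊕ Fin j)) ℝ,
        Rq.BlockTriangular (wt3 k j) ∧ (∀ i, 0 < Rq i i) ∧
        1 + θᵀ * (ξ * P - P * ξ) * θ = q * Rq)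
    (Utilde : Matrix (Fin k ⊕ (Fin k ⊕ Fin j)) (Fin k) ℝ)
    (hUtilde : Utilde =
      θ *
        ((fromBlocks θM 0 0 (1 : Matrix (Fin j) (Fin j) ℝ)).submatrix
          (Equiv.sumAssoc (Fin k) (Fin k) (Fin j)).symm
          (Equiv.sumAssoc (Fin k) (Fin k) (Fin j)).symm) *
        ((fromRows (fromRows (1 : Matrix (Fin k) (Fin k) ℝ) (0 : Matrix (Fin k) (Fin k) ℝ))
            (0 : Matrix (Fin j) (Fin k) ℝ)).submatrix
          (Equiv.sumAssoc (Fin k) (Fin k) (Fin j)).symm id)) :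
    Utildeᵀ * Utilde = 1 ∧
    θ * q * θᵀ * P * θ * qᵀ * θᵀ = Utilde * Utildeᵀ :=
  retraction_via_stiefel_update_general k j U Uperp hU hUperp horth P hP V hV Ω ξ hΩ hξ A hA θA R
    hθA hAQR θ hθ θM hθM hθMQR q hq hqQR Utilde hUtilde
end

section
/- In the setting of Lemma 4 of the paper: with θ, ξ, P, Ũ as in Lemma 3 and Ṽ = [Ũ | Ũ^⊥], for any η ∈ T_P Gr_{k,m} with B = con_V(η), the transported vector τ_{ξ,P,θ}(η) satisfies con_{Ṽ}(τ_{ξ,P,θ}(η)) = θ_Aᵀ B (with appropriate choice of Ũ^⊥), i.e. Ṽᵀ τ_{ξ,P,θ}(η) Ṽ = [[0, Bᵀθ_A],[θ_AᵀB, 0]]. -/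
/-!
The frame `Ṽ = θ q` is orthogonal and `Ũ` consists of its first `k` columns, so `Ũ^⊥` can be
taken to be the remaining ones. Since `τ(η) = Ṽ (θᵀ η θ) Ṽᵀ`, the coordinates of `τ(η)` in `Ṽ`
are those of `η` in `θ = V diag(1, θ_A)`. A horizontal vector `η = [P, Ω']` has coordinates
`[[0, Bᵀ], [B, 0]]` in `V`, and conjugation by `diag(1, θ_A)` turns them into
`[[0, Bᵀ θ_A], [θ_Aᵀ B, 0]]`.
-/

open Matrix

namespace Matrix

theorem fromRows_fromRows_submatrix_sumAssoc_symm {R m₁ m₂ m₃ n : Type*} (A : Matrix m₁ n R)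
    (B : Matrix m₂ n R) (C : Matrix m₃ n R) :
    (fromRows (fromRows A B) C).submatrix (Equiv.sumAssoc m₁ m₂ m₃).symm id =
      fromRows A (fromRows B C) := by
  ext (i | i | i) j <;> rfl

variable {R : Type*} [CommRing R] {m n p : Type*}

theorem transpose_mul_transpose_mul_eq_one [Fintype n] [DecidableEq n] {W Q : Matrix n n R}
    (hW : Wᵀ * W = 1) (hQ : Qᵀ * Q = 1) : (W * Q)ᵀ * (W * Q) = 1 := by
  rw [transpose_mul, Matrix.mul_assoc, ← Matrix.mul_assoc Wᵀ, hW, Matrix.one_mul, hQ]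

theorem submatrix_transpose_mul_submatrix_eq_one [Fintype m] [Fintype n] [DecidableEq m]
    [DecidableEq n] {M : Matrix n n R} (e : m ≃ n) (hM : Mᵀ * M = 1) :
    (M.submatrix e e)ᵀ * M.submatrix e e = 1 := by
  rw [transpose_submatrix, submatrix_mul_equiv, hM, submatrix_one_equiv]

theorem fromBlocks_diagonal_transpose_mul_eq_one [Fintype m] [Fintype n] [DecidableEq m]
    [DecidableEq n] {A : Matrix m m R} {D : Matrix n n R} (hA : Aᵀ * A = 1) (hD : Dᵀ * D = 1) :
    (fromBlocks A 0 0 D)ᵀ * fromBlocks A 0 0 D = 1 := by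
  simp [fromBlocks_transpose, fromBlocks_multiply, hA, hD]

theorem fromBlocks_one_transpose_mul_offDiag_mul [Fintype m] [Fintype p] [DecidableEq m]
    (B : Matrix p m R) (Q : Matrix p p R) :
    (fromBlocks 1 0 0 Q)ᵀ * fromBlocks 0 Bᵀ B 0 * fromBlocks 1 0 0 Q =
      fromBlocks 0 (Bᵀ * Q) (Qᵀ * B) 0 := by
  simp [fromBlocks_transpose, fromBlocks_multiply]

theorem transpose_mul_conj_mul_eq [Fintype m] [Fintype n] [DecidableEq n] {W : Matrix m n R}
    (hW : Wᵀ * W = 1) (X : Matrix n n R) : Wᵀ * (W * X * Wᵀ) * W = X := by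
  simp only [Matrix.mul_assoc, hW, Matrix.mul_one, ← Matrix.mul_assoc Wᵀ, Matrix.one_mul]

theorem fromCols_transpose_mul_fromCols_eq_one [Fintype m] [DecidableEq n] [DecidableEq p]
    {U : Matrix m n R} {U' : Matrix m p R} (hU : Uᵀ * U = 1) (hU' : U'ᵀ * U' = 1)
    (horth : Uᵀ * U' = 0) : (fromCols U U')ᵀ * fromCols U U' = 1 := by
  rw [transpose_fromCols, fromRows_mul_fromCols, hU, hU', horth, ← transpose_transpose U,
    ← transpose_mul, horth, transpose_zero, fromBlocks_one]

theorem toCols_orthonormal [Fintype m] [DecidableEq n] [DecidableEq p]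
    {W : Matrix m (n ⊕ p) R} (hW : Wᵀ * W = 1) :
    W.toCols₂ᵀ * W.toCols₂ = 1 ∧ W.toCols₁ᵀ * W.toCols₂ = 0 := by
  rw [← fromCols_toCols W, transpose_fromCols, fromRows_mul_fromCols, ← fromBlocks_one,
    fromBlocks_inj] at hW
  exact ⟨hW.2.2.2, hW.2.1⟩

theorem mul_fromRows_one_zero [Fintype n] [Fintype p] [DecidableEq n]
    (W : Matrix m (n ⊕ p) R) :
    W * fromRows (1 : Matrix n n R) (0 : Matrix p n R) = W.toCols₁ := by
  conv_lhs => rw [← fromCols_toCols W]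
  rw [fromCols_mul_fromRows, Matrix.mul_one, Matrix.mul_zero, add_zero]

theorem isSymm_mul_sub_mul_of_isSymm_of_skew [Fintype n] {P Ω : Matrix n n R} (hP : P.IsSymm)
    (hΩ : Ωᵀ = -Ω) : (P * Ω - Ω * P).IsSymm := by
  rw [IsSymm, transpose_sub, transpose_mul, transpose_mul, hΩ, hP.eq, Matrix.neg_mul,
    Matrix.mul_neg, sub_neg_eq_add, neg_add_eq_sub]

section Commutator

variable [Fintype m] [Fintype n] {U : Matrix n m R}

theorem transpose_mul_commutator_mul_self_eq_zero [DecidableEq m] (hU : Uᵀ * U = 1)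
    (Ω : Matrix n n R) : Uᵀ * (U * Uᵀ * Ω - Ω * (U * Uᵀ)) * U = 0 := by
  simp only [Matrix.mul_sub, Matrix.sub_mul, ← Matrix.mul_assoc, hU, Matrix.one_mul]
  simp only [Matrix.mul_assoc, hU, Matrix.mul_one, sub_self]

theorem transpose_mul_commutator_mul_self_eq_zero_of_orthogonal {U' : Matrix n p R}
    (horth : Uᵀ * U' = 0) (Ω : Matrix n n R) : U'ᵀ * (U * Uᵀ * Ω - Ω * (U * Uᵀ)) * U' = 0 := by
  have horth' : U'ᵀ * U = 0 := by
    rw [← transpose_transpose U, ← transpose_mul, horth, transpose_zero]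
  simp only [Matrix.mul_sub, Matrix.sub_mul, ← Matrix.mul_assoc, horth', Matrix.zero_mul]
  simp only [Matrix.mul_assoc, horth, Matrix.mul_zero, sub_self]

theorem fromCols_transpose_mul_commutator_mul_fromCols [Fintype p] [DecidableEq m]
    {U' : Matrix n p R} (hU : Uᵀ * U = 1) (horth : Uᵀ * U' = 0) {Ω η : Matrix n n R}
    (hΩ : Ωᵀ = -Ω) (hη : η = U * Uᵀ * Ω - Ω * (U * Uᵀ)) :
    (fromCols U U')ᵀ * η * fromCols U U' = fromBlocks 0 (U'ᵀ * η * U)ᵀ (U'ᵀ * η * U) 0 := by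
  have hη_symm : η.IsSymm := hη ▸ isSymm_mul_sub_mul_of_isSymm_of_skew
    (by rw [IsSymm, transpose_mul, transpose_transpose]) hΩ
  rw [transpose_fromCols, fromRows_mul, fromRows_mul_fromCols, hη,
    transpose_mul_commutator_mul_self_eq_zero hU,
    transpose_mul_commutator_mul_self_eq_zero_of_orthogonal horth, ← hη]
  simp only [transpose_mul, hη_symm.eq, transpose_transpose, Matrix.mul_assoc]

end Commutator

end Matrix

/-- The index type `Fin k ⊕ (Fin k ⊕ Fin j)` realizes `m = 2k + j`. -/
theorem vector_transport_coordinates_general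
    (k j : ℕ)
    (U : Matrix (Fin k ⊕ (Fin k ⊕ Fin j)) (Fin k) ℝ)
    (Uperp : Matrix (Fin k ⊕ (Fin k ⊕ Fin j)) (Fin k ⊕ Fin j) ℝ)
    (hU : Uᵀ * U = 1) (hUperp : Uperpᵀ * Uperp = 1) (horth : Uᵀ * Uperp = 0)
    (P : Matrix (Fin k ⊕ (Fin k ⊕ Fin j)) (Fin k ⊕ (Fin k ⊕ Fin j)) ℝ)
    (hP : P = U * Uᵀ)
    (V : Matrix (Fin k ⊕ (Fin k ⊕ Fin j)) (Fin k ⊕ (Fin k ⊕ Fin j)) ℝ)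
    (hV : V = fromCols U Uperp)
    (θA : Matrix (Fin k ⊕ Fin j) (Fin k ⊕ Fin j) ℝ)
    (hθA : θAᵀ * θA = 1)
    (θ : Matrix (Fin k ⊕ (Fin k ⊕ Fin j)) (Fin k ⊕ (Fin k ⊕ Fin j)) ℝ)
    (hθ : θ = V * fromBlocks 1 0 0 θA)
    (θM : Matrix (Fin k ⊕ Fin k) (Fin k ⊕ Fin k) ℝ)
    (hθM : θMᵀ * θM = 1)
    (q : Matrix (Fin k ⊕ (Fin k ⊕ Fin j)) (Fin k ⊕ (Fin k ⊕ Fin j)) ℝ)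
    (hq : q = (fromBlocks θM 0 0 (1 : Matrix (Fin j) (Fin j) ℝ)).submatrix
      (Equiv.sumAssoc (Fin k) (Fin k) (Fin j)).symm
      (Equiv.sumAssoc (Fin k) (Fin k) (Fin j)).symm)
    (Utilde : Matrix (Fin k ⊕ (Fin k ⊕ Fin j)) (Fin k) ℝ)
    (hUtilde : Utilde =
      θ * q *
        ((fromRows (fromRows (1 : Matrix (Fin k) (Fin k) ℝ) (0 : Matrix (Fin k) (Fin k) ℝ))
            (0 : Matrix (Fin j) (Fin k) ℝ)).submatrix
          (Equiv.sumAssoc (Fin k) (Fin k) (Fin j)).symm id))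
    (η : Matrix (Fin k ⊕ (Fin k ⊕ Fin j)) (Fin k ⊕ (Fin k ⊕ Fin j)) ℝ)
    (hη : ∃ Ω' : Matrix (Fin k ⊕ (Fin k ⊕ Fin j)) (Fin k ⊕ (Fin k ⊕ Fin j)) ℝ,
        Ω'ᵀ = -Ω' ∧ η = P * Ω' - Ω' * P)
    (B : Matrix (Fin k ⊕ Fin j) (Fin k) ℝ) (hB : B = Uperpᵀ * η * U) :
    ∃ Utildeperp : Matrix (Fin k ⊕ (Fin k ⊕ Fin j)) (Fin k ⊕ Fin j) ℝ,
      Utildeperpᵀ * Utildeperp = 1 ∧ Utildeᵀ * Utildeperp = 0 ∧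
      (fromCols Utilde Utildeperp)ᵀ * (θ * q * θᵀ * η * θ * qᵀ * θᵀ) *
          fromCols Utilde Utildeperp =
        fromBlocks 0 (Bᵀ * θA) (θAᵀ * B) 0 := by
  obtain ⟨Ω', hΩ', hη⟩ := hη
  subst hP hV hB
  have hθ_orth : θᵀ * θ = 1 := hθ ▸ transpose_mul_transpose_mul_eq_one
    (fromCols_transpose_mul_fromCols_eq_one hU hUperp horth)
    (fromBlocks_diagonal_transpose_mul_eq_one (by simp) hθA)
  have hq_orth : qᵀ * q = 1 := hq ▸ submatrix_transpose_mul_submatrix_eq_one _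
    (fromBlocks_diagonal_transpose_mul_eq_one hθM (by simp))
  have hθq := transpose_mul_transpose_mul_eq_one hθ_orth hq_orth
  have hUtilde' : Utilde = (θ * q).toCols₁ := by
    rw [hUtilde, fromRows_fromRows_submatrix_sumAssoc_symm, fromRows_zero, mul_fromRows_one_zero]
  obtain ⟨hperp, horth'⟩ := toCols_orthonormal hθq
  refine ⟨(θ * q).toCols₂, hperp, hUtilde' ▸ horth', ?_⟩
  have hτ : θ * q * θᵀ * η * θ * qᵀ * θᵀ = θ * q * (θᵀ * η * θ) * (θ * q)ᵀ := by
    simp only [transpose_mul, Matrix.mul_assoc]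
  rw [hUtilde', fromCols_toCols, hτ, transpose_mul_conj_mul_eq hθq, hθ]
  calc (fromCols U Uperp * fromBlocks 1 0 0 θA)ᵀ * η * (fromCols U Uperp * fromBlocks 1 0 0 θA)
      = (fromBlocks 1 0 0 θA)ᵀ * ((fromCols U Uperp)ᵀ * η * fromCols U Uperp) *
          fromBlocks 1 0 0 θA := by
        simp only [transpose_mul, Matrix.mul_assoc]
    _ = fromBlocks 0 ((Uperpᵀ * η * U)ᵀ * θA) (θAᵀ * (Uperpᵀ * η * U)) 0 := by
      rw [fromCols_transpose_mul_commutator_mul_fromCols hU horth hΩ' hη,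
        fromBlocks_one_transpose_mul_offDiag_mul]

/-- Lemma 4 of the paper: in the setting of Lemma 3 (with
`q = q_{θᵀ[ξ,P]θ}(1) = diag(θ_M, I_{m−2k})`), for any tangent vector `η` with
coordinates `B = con_V(η)`, the transported vector
`τ_{ξ,P,θ}(η) = θ q θᵀ η θ qᵀ θᵀ` satisfies, for an appropriate choice of
`Ũ^⊥`, `Ṽᵀ τ_{ξ,P,θ}(η) Ṽ = [[0, Bᵀθ_A],[θ_AᵀB, 0]]` where
`Ṽ = [Ũ | Ũ^⊥]`; in particular `con_{Ṽ}(τ_{ξ,P,θ}(η)) = θ_Aᵀ B`.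
The ambient index set `Fin k ⊕ (Fin k ⊕ Fin j)` realizes `m = 2k + j`. -/
theorem vector_transport_coordinates
    (k j : ℕ)
    (U : Matrix (Fin k ⊕ (Fin k ⊕ Fin j)) (Fin k) ℝ)
    (Uperp : Matrix (Fin k ⊕ (Fin k ⊕ Fin j)) (Fin k ⊕ Fin j) ℝ)
    (hU : Uᵀ * U = 1) (hUperp : Uperpᵀ * Uperp = 1) (horth : Uᵀ * Uperp = 0)
    (hspan : U * Uᵀ + Uperp * Uperpᵀ = 1)
    (P : Matrix (Fin k ⊕ (Fin k ⊕ Fin j)) (Fin k ⊕ (Fin k ⊕ Fin j)) ℝ)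
    (hP : P = U * Uᵀ)
    (V : Matrix (Fin k ⊕ (Fin k ⊕ Fin j)) (Fin k ⊕ (Fin k ⊕ Fin j)) ℝ)
    (hV : V = fromCols U Uperp)
    (Ω ξ : Matrix (Fin k ⊕ (Fin k ⊕ Fin j)) (Fin k ⊕ (Fin k ⊕ Fin j)) ℝ)
    (hΩ : Ωᵀ = -Ω) (hξ : ξ = P * Ω - Ω * P)
    (A : Matrix (Fin k ⊕ Fin j) (Fin k) ℝ) (hA : A = Uperpᵀ * ξ * U)
    (θA : Matrix (Fin k ⊕ Fin j) (Fin k ⊕ Fin j) ℝ)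
    (R : Matrix (Fin k) (Fin k) ℝ)
    (hθA : θAᵀ * θA = 1) (hθA' : θA * θAᵀ = 1)
    (hR : R.BlockTriangular (id : Fin k → Fin k))
    (hAQR : A = θA * fromRows R 0)
    (θ : Matrix (Fin k ⊕ (Fin k ⊕ Fin j)) (Fin k ⊕ (Fin k ⊕ Fin j)) ℝ)
    (hθ : θ = V * fromBlocks 1 0 0 θA)
    (θM : Matrix (Fin k ⊕ Fin k) (Fin k ⊕ Fin k) ℝ)
    (hθM : θMᵀ * θM = 1)
    (q : Matrix (Fin k ⊕ (Fin k ⊕ Fin j)) (Fin k ⊕ (Fin k ⊕ Fin j)) ℝ)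
    (hq : q = (fromBlocks θM 0 0 (1 : Matrix (Fin j) (Fin j) ℝ)).submatrix
      (Equiv.sumAssoc (Fin k) (Fin k) (Fin j)).symm
      (Equiv.sumAssoc (Fin k) (Fin k) (Fin j)).symm)
    (Utilde : Matrix (Fin k ⊕ (Fin k ⊕ Fin j)) (Fin k) ℝ)
    (hUtilde : Utilde =
      θ * q *
        ((fromRows (fromRows (1 : Matrix (Fin k) (Fin k) ℝ) (0 : Matrix (Fin k) (Fin k) ℝ))
            (0 : Matrix (Fin j) (Fin k) ℝ)).submatrix
          (Equiv.sumAssoc (Fin k) (Fin k) (Fin j)).symm id))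
    (η : Matrix (Fin k ⊕ (Fin k ⊕ Fin j)) (Fin k ⊕ (Fin k ⊕ Fin j)) ℝ)
    (hη : ∃ Ω' : Matrix (Fin k ⊕ (Fin k ⊕ Fin j)) (Fin k ⊕ (Fin k ⊕ Fin j)) ℝ,
        Ω'ᵀ = -Ω' ∧ η = P * Ω' - Ω' * P)
    (B : Matrix (Fin k ⊕ Fin j) (Fin k) ℝ) (hB : B = Uperpᵀ * η * U) :
    ∃ Utildeperp : Matrix (Fin k ⊕ (Fin k ⊕ Fin j)) (Fin k ⊕ Fin j) ℝ,
      Utildeperpᵀ * Utildeperp = 1 ∧ Utildeᵀ * Utildeperp = 0 ∧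
      (fromCols Utilde Utildeperp)ᵀ * (θ * q * θᵀ * η * θ * qᵀ * θᵀ) *
          fromCols Utilde Utildeperp =
        fromBlocks 0 (Bᵀ * θA) (θAᵀ * B) 0 :=
  vector_transport_coordinates_general k j U Uperp hU hUperp horth P hP V hV θA hθA θ hθ θM hθM q hq
    Utilde hUtilde η hη B hB
end
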